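/- arXiv:2104.09706 — 2 statements merged into one kernel-verified Lean document; each statement's English description precedes it below -/
import Mathlib

section
/- Among all connected graphs on n vertices (n >= 3) with unit edge resistances in which the edge ab is not a cut-edge, the quantity R'_{ab} - R_{ab} attains its minimum value 4/(n(n-2)) for the complete graph K_n. -/
/-
Write `C` for the minimal Dirichlet energy `inf {E(f) : f a = 1, f b = 0}`, so that `R = 1 / C`.
For every admissible `f` the edge `ab` contributes exactly `(f a - f b)² = 1` to the energy, hence
`C_G = C_{G - ab} + 1` and `R' - R = 1 / C' - 1 / (C' + 1) = 1 / (C' (C' + 1))` with `C' = C_{G - ab}`,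
a decreasing function of `C'`. The potential equal to `1/2` off `{a, b}` only pays `1/4` on the
at most `2 (n - 2)` edges leaving `{a, b}`, so `C' ≤ (n - 2) / 2`; in `K_n - ab` every other vertex
`y` is joined to both `a` and `b` and contributes `(1 - f y)² + (f y)² ≥ 1/2`, so there `C'` equals
`(n - 2) / 2`. Finally `C' > 0` because `G - ab` is connected: along a walk of length `L` from `a`
to `b` some edge carries a potential drop of at least `1 / L`.
-/

open Finset

section Defs

variable {V : Type*} [Fintype V]

/-- Total conductance at a vertex. -/
noncomputable def condAt (c : V → V → ℝ) (x : V) : ℝ := ∑ y, c x y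

/-- Transition probabilities of the random walk induced by conductances `c`. -/
noncomputable def step (c : V → V → ℝ) (x y : V) : ℝ := c x y / condAt c x

open scoped Classical in
/-- `surv P b n a` is the probability that the walk with transition matrix `P`
started at `a` has not visited `b` by time `n`. -/
noncomputable def surv (P : V → V → ℝ) (b : V) : ℕ → V → ℝ
  | 0 => fun a => if a = b then 0 else 1
  | n + 1 => fun a => if a = b then 0 else ∑ y, P a y * surv P b n y

/-- Expected hitting time of `b` starting from `a`, as the sum over `n` of the
survival probabilities `P(T_b > n)`. -/
noncomputable def hitTime (P : V → V → ℝ) (a b : V) : ℝ := ∑' n, surv P b n a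

/-- Expected return time to `z` : one step plus the expected hitting time of `z`
from the position after the first step. -/
noncomputable def returnTime (P : V → V → ℝ) (z : V) : ℝ :=
  1 + ∑ y, P z y * hitTime P y z

/-- Dirichlet energy of a potential `f` for conductances `c`. -/
noncomputable def energy (c : V → V → ℝ) (f : V → ℝ) : ℝ :=
  (1 / 2) * ∑ x, ∑ y, c x y * (f x - f y) ^ 2

/-- Effective resistance between `a` and `b` (Dirichlet principle): the
reciprocal of the minimal Dirichlet energy among potentials with
`f a = 1`, `f b = 0`. -/
noncomputable def effRes (c : V → V → ℝ) (a b : V) : ℝ :=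
  1 / sInf {E : ℝ | ∃ f : V → ℝ, f a = 1 ∧ f b = 0 ∧ E = energy c f}

end Defs

open scoped Classical in
/-- Unit conductances on the edges of a simple graph. -/
noncomputable def gw {V : Type*} (G : SimpleGraph V) (x y : V) : ℝ :=
  if G.Adj x y then 1 else 0

/-- Number of edges of a simple graph. -/
noncomputable def numEdges {V : Type*} (G : SimpleGraph V) : ℕ := G.edgeSet.ncard

section Energy

variable {V : Type*} [Fintype V] [DecidableEq V]

noncomputable def cutEnergy (c : V → V → ℝ) (f : V → ℝ) (S : Finset V) : ℝ :=
  ∑ x ∈ S, ∑ y ∈ Sᶜ, c x y * (f x - f y) ^ 2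

theorem energy_eq_cutEnergy_add {c : V → V → ℝ} (hc : ∀ x y, c x y = c y x)
    (f : V → ℝ) (S : Finset V) :
    energy c f = cutEnergy c f S + (1 / 2) *
      (∑ x ∈ S, ∑ y ∈ S, c x y * (f x - f y) ^ 2 + ∑ x ∈ Sᶜ, ∑ y ∈ Sᶜ, c x y * (f x - f y) ^ 2) := by
  have hswap : ∑ x ∈ Sᶜ, ∑ y ∈ S, c x y * (f x - f y) ^ 2 = cutEnergy c f S := by
    rw [cutEnergy, Finset.sum_comm]
    exact Finset.sum_congr rfl fun x _ => Finset.sum_congr rfl fun y _ => by rw [hc, sub_sq_comm]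
  unfold energy
  simp_rw [← Finset.sum_add_sum_compl S, Finset.sum_add_distrib, hswap]
  unfold cutEnergy
  ring

theorem cutEnergy_le_energy {c : V → V → ℝ} (hc : ∀ x y, c x y = c y x)
    (hc₀ : ∀ x y, 0 ≤ c x y) (f : V → ℝ) (S : Finset V) : cutEnergy c f S ≤ energy c f := by
  rw [energy_eq_cutEnergy_add hc f S, le_add_iff_nonneg_right]
  have hblock : ∀ T : Finset V, 0 ≤ ∑ x ∈ T, ∑ y ∈ T, c x y * (f x - f y) ^ 2 := fun T =>
    Finset.sum_nonneg fun x _ => Finset.sum_nonneg fun y _ => mul_nonneg (hc₀ x y) (sq_nonneg _)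
  exact mul_nonneg (by norm_num) (add_nonneg (hblock S) (hblock Sᶜ))

theorem cutEnergy_pair (c : V → V → ℝ) (f : V → ℝ) {a b : V} (hab : a ≠ b) :
    cutEnergy c f {a, b} =
      ∑ y ∈ {a, b}ᶜ, (c a y * (f a - f y) ^ 2 + c b y * (f b - f y) ^ 2) := by
  rw [cutEnergy, Finset.sum_pair hab, Finset.sum_add_distrib]

theorem card_compl_pair {a b : V} (hab : a ≠ b) :
    ((({a, b} : Finset V)ᶜ).card : ℝ) = Fintype.card V - 2 := by
  have h2 : 2 ≤ Fintype.card V := Fintype.one_lt_card_iff.mpr ⟨a, b, hab⟩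
  rw [Finset.card_compl, Finset.card_pair hab, Nat.cast_sub h2, Nat.cast_two]

end Energy

section MinEnergy

variable {V : Type*} [Fintype V]

noncomputable def minEnergy (c : V → V → ℝ) (a b : V) : ℝ :=
  sInf {E : ℝ | ∃ f : V → ℝ, f a = 1 ∧ f b = 0 ∧ E = energy c f}

theorem effRes_eq_inv (c : V → V → ℝ) (a b : V) : effRes c a b = (minEnergy c a b)⁻¹ :=
  one_div _

theorem energy_nonneg {c : V → V → ℝ} (hc₀ : ∀ x y, 0 ≤ c x y) (f : V → ℝ) : 0 ≤ energy c f :=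
  mul_nonneg (by norm_num) <|
    Finset.sum_nonneg fun x _ => Finset.sum_nonneg fun y _ => mul_nonneg (hc₀ x y) (sq_nonneg _)

theorem minEnergy_le {c : V → V → ℝ} (hc₀ : ∀ x y, 0 ≤ c x y) {a b : V} {f : V → ℝ}
    (hfa : f a = 1) (hfb : f b = 0) : minEnergy c a b ≤ energy c f :=
  csInf_le ⟨0, fun _ ⟨g, _, _, hE⟩ => hE ▸ energy_nonneg hc₀ g⟩ ⟨f, hfa, hfb, rfl⟩

theorem le_minEnergy {c : V → V → ℝ} {a b : V} (hab : a ≠ b) {m : ℝ}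
    (h : ∀ f : V → ℝ, f a = 1 → f b = 0 → m ≤ energy c f) : m ≤ minEnergy c a b := by
  classical
  refine le_csInf ⟨_, fun x => if x = a then 1 else 0, by simp, by simp [hab.symm], rfl⟩ ?_
  rintro _ ⟨f, hfa, hfb, rfl⟩
  exact h f hfa hfb

theorem minEnergy_eq_add_of_energy_eq_add {c c' : V → V → ℝ} (hc₀ : ∀ x y, 0 ≤ c x y)
    (hc₀' : ∀ x y, 0 ≤ c' x y) {a b : V} (hab : a ≠ b) {k : ℝ}
    (h : ∀ f : V → ℝ, f a = 1 → f b = 0 → energy c f = energy c' f + k) :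
    minEnergy c a b = minEnergy c' a b + k := by
  apply le_antisymm
  · rw [← sub_le_iff_le_add]
    refine le_minEnergy hab fun f hfa hfb => ?_
    linarith [minEnergy_le hc₀ hfa hfb, h f hfa hfb]
  · refine le_minEnergy hab fun f hfa hfb => ?_
    linarith [minEnergy_le hc₀' hfa hfb, h f hfa hfb]

end MinEnergy

section UnitConductances

variable {V : Type*}

theorem gw_nonneg (G : SimpleGraph V) (x y : V) : 0 ≤ gw G x y := by
  unfold gw; split_ifs <;> norm_num

theorem gw_le_one (G : SimpleGraph V) (x y : V) : gw G x y ≤ 1 := by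
  unfold gw; split_ifs <;> norm_num

theorem gw_of_adj {G : SimpleGraph V} {x y : V} (h : G.Adj x y) : gw G x y = 1 := by
  simp [gw, h]

theorem gw_of_not_adj {G : SimpleGraph V} {x y : V} (h : ¬ G.Adj x y) : gw G x y = 0 := by
  simp [gw, h]

theorem gw_congr {G H : SimpleGraph V} {x y u v : V} (h : G.Adj x y ↔ H.Adj u v) :
    gw G x y = gw H u v := by
  by_cases hxy : G.Adj x y
  · rw [gw_of_adj hxy, gw_of_adj (h.1 hxy)]
  · rw [gw_of_not_adj hxy, gw_of_not_adj (mt h.2 hxy)]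

theorem gw_symm (G : SimpleGraph V) (x y : V) : gw G x y = gw G y x :=
  gw_congr (G.adj_comm x y)

theorem gw_eq_gw_deleteEdges_add [DecidableEq V] {G : SimpleGraph V} {a b : V} (hab : G.Adj a b)
    (x y : V) : gw G x y = gw (G.deleteEdges {s(a, b)}) x y +
      ((if x = a ∧ y = b then 1 else 0) + (if x = b ∧ y = a then 1 else 0)) := by
  by_cases h₁ : x = a ∧ y = b
  · obtain ⟨rfl, rfl⟩ := h₁
    simp [gw, hab, hab.ne]
  by_cases h₂ : x = b ∧ y = a
  · obtain ⟨rfl, rfl⟩ := h₂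
    simp [gw, hab.symm, hab.ne']
  · have : s(x, y) ≠ s(a, b) := by rw [Ne, Sym2.eq_iff]; tauto
    have hadj : (G.deleteEdges {s(a, b)}).Adj x y ↔ G.Adj x y := by simp [this]
    simp only [h₁, h₂, if_false, add_zero]
    exact gw_congr hadj.symm

theorem energy_gw_eq_deleteEdges_add [Fintype V] {G : SimpleGraph V} {a b : V} (hab : G.Adj a b)
    (f : V → ℝ) : energy (gw G) f = energy (gw (G.deleteEdges {s(a, b)})) f + (f a - f b) ^ 2 := by
  classical
  unfold energy
  simp only [gw_eq_gw_deleteEdges_add hab, add_mul, Finset.sum_add_distrib, ite_mul, one_mul,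
    zero_mul, ite_and]
  simp [Finset.sum_ite_irrel, sub_sq_comm (f b)]
  ring

end UnitConductances

theorem SimpleGraph.Walk.abs_sub_le_length_mul {V : Type*} {G : SimpleGraph V} {f : V → ℝ}
    {ε : ℝ} (hf : ∀ x y, G.Adj x y → |f x - f y| ≤ ε) {u v : V} (w : G.Walk u v) :
    |f u - f v| ≤ w.length * ε := by
  induction w with
  | nil => simp
  | @cons u v z hadj p ih =>
    calc |f u - f z| ≤ |f u - f v| + |f v - f z| := abs_sub_le _ _ _
      _ ≤ ε + p.length * ε := add_le_add (hf u v hadj) ih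
      _ = (p.cons hadj).length * ε := by rw [SimpleGraph.Walk.length_cons]; push_cast; ring

section Bounds

variable {V : Type*} [Fintype V]

theorem sq_sub_le_energy_of_adj {G : SimpleGraph V} (f : V → ℝ) {x y : V} (h : G.Adj x y) :
    (f x - f y) ^ 2 ≤ energy (gw G) f := by
  classical
  calc (f x - f y) ^ 2 = gw G x y * (f x - f y) ^ 2 := by rw [gw_of_adj h, one_mul]
    _ ≤ cutEnergy (gw G) f {x} := by
      rw [cutEnergy, Finset.sum_singleton]
      exact Finset.single_le_sum (f := fun z => gw G x z * (f x - f z) ^ 2)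
        (fun z _ => mul_nonneg (gw_nonneg G x z) (sq_nonneg _)) (by simpa using h.ne.symm)
    _ ≤ energy (gw G) f := cutEnergy_le_energy (gw_symm G) (gw_nonneg G) f {x}

theorem minEnergy_pos {G : SimpleGraph V} (hG : G.Connected) {a b : V} (hab : a ≠ b) :
    0 < minEnergy (gw G) a b := by
  obtain ⟨w⟩ := hG.preconnected a b
  have hL : 0 < (w.length : ℝ) :=
    Nat.cast_pos.2 (Nat.pos_of_ne_zero fun h => hab (w.eq_of_length_eq_zero h))
  refine lt_of_lt_of_le (by positivity : (0 : ℝ) < 1 / w.length ^ 2)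
    (le_minEnergy hab fun f hfa hfb => ?_)
  have hE := energy_nonneg (gw_nonneg G) f
  have hlip : 1 ≤ w.length * √(energy (gw G) f) := by
    have := w.abs_sub_le_length_mul (f := f) fun x y hxy => by
      rw [← Real.sqrt_sq_eq_abs]; exact Real.sqrt_le_sqrt (sq_sub_le_energy_of_adj f hxy)
    rwa [hfa, hfb, sub_zero, abs_one] at this
  rw [div_le_iff₀ (by positivity)]
  calc 1 ≤ (w.length * √(energy (gw G) f)) ^ 2 := one_le_pow₀ hlip
    _ = energy (gw G) f * w.length ^ 2 := by rw [mul_pow, Real.sq_sqrt hE]; ring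

theorem minEnergy_eq_minEnergy_deleteEdges_add_one {G : SimpleGraph V} {a b : V}
    (hab : G.Adj a b) :
    minEnergy (gw G) a b = minEnergy (gw (G.deleteEdges {s(a, b)})) a b + 1 :=
  minEnergy_eq_add_of_energy_eq_add (gw_nonneg _) (gw_nonneg _) hab.ne fun f hfa hfb => by
    rw [energy_gw_eq_deleteEdges_add hab, hfa, hfb]; norm_num

variable [DecidableEq V]

noncomputable def midPotential (a b : V) (x : V) : ℝ :=
  if x = a then 1 else if x = b then 0 else 1 / 2

theorem energy_midPotential {c : V → V → ℝ} (hc : ∀ x y, c x y = c y x) {a b : V} (hab : a ≠ b)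
    (hcab : c a b = 0) :
    energy c (midPotential a b) = ∑ y ∈ {a, b}ᶜ, (c a y + c b y) / 4 := by
  rw [energy_eq_cutEnergy_add hc _ {a, b}, cutEnergy_pair c _ hab]
  have hin : ∑ x ∈ {a, b}, ∑ y ∈ {a, b},
      c x y * (midPotential a b x - midPotential a b y) ^ 2 = 0 := by
    simp [Finset.sum_pair hab, midPotential, hab.symm, hcab, hc b a]
  have hout : ∑ x ∈ ({a, b} : Finset V)ᶜ, ∑ y ∈ ({a, b} : Finset V)ᶜ,
      c x y * (midPotential a b x - midPotential a b y) ^ 2 = 0 := by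
    refine Finset.sum_eq_zero fun x hx => Finset.sum_eq_zero fun y hy => ?_
    simp only [Finset.mem_compl, Finset.mem_insert, Finset.mem_singleton, not_or] at hx hy
    simp [midPotential, hx, hy]
  rw [hin, hout, add_zero, mul_zero, add_zero]
  refine Finset.sum_congr rfl fun y hy => ?_
  simp only [Finset.mem_compl, Finset.mem_insert, Finset.mem_singleton, not_or] at hy
  simp [midPotential, hab.symm, hy.1, hy.2]
  ring

theorem minEnergy_le_of_not_adj (H : SimpleGraph V) {a b : V} (hab : a ≠ b) (h : ¬ H.Adj a b) :
    minEnergy (gw H) a b ≤ (Fintype.card V - 2) / 2 :=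
  calc minEnergy (gw H) a b ≤ energy (gw H) (midPotential a b) :=
        minEnergy_le (gw_nonneg H) (by simp [midPotential]) (by simp [midPotential, hab.symm])
    _ = ∑ y ∈ {a, b}ᶜ, (gw H a y + gw H b y) / 4 :=
        energy_midPotential (gw_symm H) hab (gw_of_not_adj h)
    _ ≤ ({a, b}ᶜ : Finset V).card • (1 / 2) :=
        Finset.sum_le_card_nsmul _ _ _ fun y _ => by linarith [gw_le_one H a y, gw_le_one H b y]
    _ = (Fintype.card V - 2) / 2 := by rw [nsmul_eq_mul, card_compl_pair hab]; ring

theorem le_energy_top_deleteEdges {a b : V} (hab : a ≠ b) {f : V → ℝ} (hfa : f a = 1)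
    (hfb : f b = 0) :
    (Fintype.card V - 2) / 2 ≤ energy (gw ((⊤ : SimpleGraph V).deleteEdges {s(a, b)})) f := by
  set K := (⊤ : SimpleGraph V).deleteEdges {s(a, b)}
  calc (Fintype.card V - 2) / 2 = ({a, b}ᶜ : Finset V).card • (1 / 2 : ℝ) := by
        rw [nsmul_eq_mul, card_compl_pair hab]; ring
    _ ≤ ∑ y ∈ {a, b}ᶜ, (gw K a y * (f a - f y) ^ 2 + gw K b y * (f b - f y) ^ 2) :=
        Finset.card_nsmul_le_sum _ _ _ fun y hy => ?_
    _ = cutEnergy (gw K) f {a, b} := (cutEnergy_pair _ f hab).symm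
    _ ≤ energy (gw K) f := cutEnergy_le_energy (gw_symm K) (gw_nonneg K) f _
  simp only [Finset.mem_compl, Finset.mem_insert, Finset.mem_singleton, not_or] at hy
  have hay : K.Adj a y := by simp [K, hab, Ne.symm hy.1, hy.2]
  have hby : K.Adj b y := by simp [K, hab.symm, Ne.symm hy.2, hy.1]
  rw [gw_of_adj hay, gw_of_adj hby, hfa, hfb]
  nlinarith [sq_nonneg (2 * f y - 1)]

theorem minEnergy_top_deleteEdges {a b : V} (hab : a ≠ b) :
    minEnergy (gw ((⊤ : SimpleGraph V).deleteEdges {s(a, b)})) a b = (Fintype.card V - 2) / 2 :=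
  le_antisymm (minEnergy_le_of_not_adj _ hab (by simp))
    (le_minEnergy hab fun _ => le_energy_top_deleteEdges hab)

end Bounds

theorem inv_sub_inv_add_one {C : ℝ} (hC : 0 < C) : C⁻¹ - (C + 1)⁻¹ = (C * (C + 1))⁻¹ := by
  field_simp
  ring

theorem four_div_le_inv_sub_inv_add_one {N C : ℝ} (hC : 0 < C) (hCN : C ≤ (N - 2) / 2) :
    4 / (N * (N - 2)) ≤ C⁻¹ - (C + 1)⁻¹ := by
  rw [inv_sub_inv_add_one hC, ← inv_div,
    show N * (N - 2) / 4 = (N - 2) / 2 * ((N - 2) / 2 + 1) by ring]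
  gcongr
  linarith

/-- Over all connected graphs on `n` vertices in which the edge `ab` is not a
cut-edge, the increase `R'_{ab} - R_{ab}` of effective resistance upon deleting
the edge `ab` is at least `4/(n(n-2))`, with equality attained by the complete
graph `K_n`. -/
theorem effRes_increase_min (n : ℕ) (hn : 3 ≤ n) :
    (∀ (V : Type) [Fintype V], Fintype.card V = n →
      ∀ (G : SimpleGraph V), G.Connected → ∀ a b : V, G.Adj a b →
        (G.deleteEdges {s(a, b)}).Connected →
        4 / ((n : ℝ) * ((n : ℝ) - 2))
          ≤ effRes (gw (G.deleteEdges {s(a, b)})) a b - effRes (gw G) a b) ∧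
    (∀ a b : Fin n, a ≠ b →
      effRes (gw (((⊤ : SimpleGraph (Fin n))).deleteEdges {s(a, b)})) a b
        - effRes (gw (⊤ : SimpleGraph (Fin n))) a b
        = 4 / ((n : ℝ) * ((n : ℝ) - 2))) := by
  refine ⟨fun V _ hcard G _ a b hab hG' => ?_, fun a b hab => ?_⟩
  · classical
    rw [effRes_eq_inv, effRes_eq_inv, minEnergy_eq_minEnergy_deleteEdges_add_one hab, ← hcard]
    exact four_div_le_inv_sub_inv_add_one (minEnergy_pos hG' hab.ne)
      (minEnergy_le_of_not_adj _ hab.ne (by simp))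
  · have hn' : (3 : ℝ) ≤ n := by exact_mod_cast hn
    rw [effRes_eq_inv, effRes_eq_inv,
      minEnergy_eq_minEnergy_deleteEdges_add_one ((SimpleGraph.top_adj a b).2 hab),
      minEnergy_top_deleteEdges hab, Fintype.card_fin, inv_sub_inv_add_one (by linarith),
      show ((n : ℝ) - 2) / 2 * (((n : ℝ) - 2) / 2 + 1) = n * (n - 2) / 4 by ring, inv_div]
end

section
/- For a regular edge-transitive graph G, the effective resistance across any edge ab (with unit edge resistances) equals (|V| - 1)/|E|. -/
/-!
Foster's theorem: in a connected graph the effective resistances of the edges sum to `|V| - 1`.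
Let `L` be the Laplacian, `J` the all-ones matrix and `M = (L + J)⁻¹`. Then `g = M (e_a - e_b)`
solves `L g = e_a - e_b`, and Cauchy–Schwarz for the form `⟨f, L f⟩` (the Dirichlet energy)
shows that the normalised potential `(g - g b) / (g a - g b)` minimises the energy, so
`R(a, b) = g a - g b = M a a - M a b - M b a + M b b`. Summed over ordered adjacent pairs this is
`2 tr (L M) = 2 tr (1 - M J) = 2 (|V| - 1)`. Effective resistance is invariant under graph
automorphisms and symmetric, so edge transitivity makes every edge have resistance `R(a, b)`,
whence `2 |E| R(a, b) = 2 (|V| - 1)`.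
-/

open Finset

open Matrix

section Resistance

variable {V : Type*} [Fintype V]

theorem energy_affine (c : V → V → ℝ) (f : V → ℝ) (s t : ℝ) :
    energy c (fun x => s * f x + t) = s ^ 2 * energy c f := by
  simp only [energy, mul_sum]
  refine sum_congr rfl fun x _ => sum_congr rfl fun y _ => ?_
  ring

theorem effRes_comm (c : V → V → ℝ) (a b : V) : effRes c a b = effRes c b a := by
  have h : ∀ a b : V, {E : ℝ | ∃ f : V → ℝ, f a = 1 ∧ f b = 0 ∧ E = energy c f} ⊆
      {E : ℝ | ∃ f : V → ℝ, f b = 1 ∧ f a = 0 ∧ E = energy c f} := by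
    rintro a b _ ⟨f, hfa, hfb, rfl⟩
    refine ⟨fun x => -1 * f x + 1, by simp [hfb], by simp [hfa], ?_⟩
    rw [energy_affine]
    ring
  rw [effRes, effRes, (h a b).antisymm (h b a)]

theorem effRes_congr_equiv {W : Type*} [Fintype W] {c : V → V → ℝ} {c' : W → W → ℝ}
    (σ : V ≃ W) (hc : ∀ x y, c' (σ x) (σ y) = c x y) (a b : V) :
    effRes c' (σ a) (σ b) = effRes c a b := by
  have hE : ∀ f : W → ℝ, energy c (f ∘ σ) = energy c' f := by
    intro f
    simp only [energy, Function.comp_apply, ← hc]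
    congr 1
    exact Fintype.sum_equiv σ _ _ fun x => Fintype.sum_equiv σ _ _ fun y => rfl
  unfold effRes
  congr 2
  ext E
  constructor
  · rintro ⟨f, hfa, hfb, rfl⟩
    exact ⟨f ∘ σ, hfa, hfb, (hE f).symm⟩
  · rintro ⟨f, hfa, hfb, rfl⟩
    refine ⟨f ∘ σ.symm, by simpa using hfa, by simpa using hfb, ?_⟩
    rw [← hE, Function.comp_assoc, σ.symm_comp_self, Function.comp_id]

end Resistance

namespace SimpleGraph

variable {V : Type*} (G : SimpleGraph V)

theorem gw_comm (x y : V) : gw G x y = gw G y x := by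
  rw [gw, gw, G.adj_comm]

theorem effRes_gw_map [Fintype V] {W : Type*} [Fintype W] {G' : SimpleGraph W} (φ : G ≃g G')
    (a b : V) : effRes (gw G') (φ a) (φ b) = effRes (gw G) a b :=
  effRes_congr_equiv φ.toEquiv (fun x y => by rw [gw, gw, ← φ.map_adj_iff]; rfl) a b

variable [DecidableRel G.Adj]

theorem gw_eq_adjMatrix : gw G = G.adjMatrix ℝ := by
  funext x y
  rw [adjMatrix_apply, gw]
  congr

variable [Fintype V]

theorem sum_gw_eq_degree (x : V) : ∑ y, gw G x y = G.degree x := by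
  simp only [gw_eq_adjMatrix, adjMatrix_apply, G.degree_eq_sum_if_adj (R := ℝ)]

theorem sum_sum_gw : ∑ x, ∑ y, gw G x y = 2 * numEdges G := by
  rw [sum_congr rfl fun x _ => G.sum_gw_eq_degree x, ← Nat.cast_sum,
    sum_degrees_eq_twice_card_edges, numEdges, ← coe_edgeFinset, Set.ncard_coe_finset]
  push_cast
  rfl

theorem sum_gw_mul_eq_of_forall_adj {F : V → V → ℝ} {r : ℝ}
    (hF : ∀ x y, G.Adj x y → F x y = r) :
    ∑ x, ∑ y, gw G x y * F x y = 2 * numEdges G * r := by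
  rw [← G.sum_sum_gw, sum_mul]
  refine sum_congr rfl fun x _ => ?_
  rw [sum_mul]
  refine sum_congr rfl fun y _ => ?_
  by_cases hxy : G.Adj x y
  · rw [hF x y hxy]
  · rw [gw, if_neg hxy, zero_mul, zero_mul]

variable [DecidableEq V]

theorem energy_gw (f : V → ℝ) : energy (gw G) f = toBilin' (G.lapMatrix ℝ) f f := by
  rw [toBilin'_apply', ← toLinearMap₂'_apply', lapMatrix_toLinearMap₂', energy]
  simp only [gw, ite_mul, one_mul, zero_mul]
  ring

theorem energy_gw_nonneg (f : V → ℝ) : 0 ≤ energy (gw G) f := by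
  simpa [energy_gw, toBilin'_apply'] using (posSemidef_lapMatrix ℝ G).dotProduct_mulVec_nonneg f

section Potential

variable {G} {a b : V} {g : V → ℝ}

theorem toBilin'_lapMatrix_apply_of_mulVec_eq
    (hg : G.lapMatrix ℝ *ᵥ g = Pi.single a 1 - Pi.single b 1) (f : V → ℝ) :
    toBilin' (G.lapMatrix ℝ) f g = f a - f b := by
  rw [toBilin'_apply', hg, dotProduct_sub, dotProduct_single, dotProduct_single, mul_one, mul_one]

theorem energy_gw_of_lapMatrix_mulVec_eq
    (hg : G.lapMatrix ℝ *ᵥ g = Pi.single a 1 - Pi.single b 1) :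
    energy (gw G) g = g a - g b := by
  rw [energy_gw, toBilin'_lapMatrix_apply_of_mulVec_eq hg]

theorem one_le_mul_energy_gw_of_lapMatrix_mulVec_eq
    (hg : G.lapMatrix ℝ *ᵥ g = Pi.single a 1 - Pi.single b 1) {f : V → ℝ}
    (hfa : f a = 1) (hfb : f b = 0) :
    1 ≤ (g a - g b) * energy (gw G) f := by
  have hsymm : LinearMap.IsSymm (toBilin' (G.lapMatrix ℝ)) :=
    LinearMap.BilinForm.isSymm_iff.1 <| isSymm_toBilin'_iff_isSymm.2 (G.isSymm_lapMatrix (R := ℝ))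
  have hcs := LinearMap.BilinForm.apply_sq_le_of_symm _
    (fun f => energy_gw G f ▸ G.energy_gw_nonneg f) hsymm f g
  rw [← energy_gw, ← energy_gw, toBilin'_lapMatrix_apply_of_mulVec_eq hg,
    energy_gw_of_lapMatrix_mulVec_eq hg, hfa, hfb] at hcs
  linarith

theorem effRes_gw_eq_of_lapMatrix_mulVec_eq (hab : a ≠ b)
    (hg : G.lapMatrix ℝ *ᵥ g = Pi.single a 1 - Pi.single b 1) :
    effRes (gw G) a b = g a - g b := by
  have hpos : 0 < g a - g b := pos_of_mul_pos_left
    (one_pos.trans_le (one_le_mul_energy_gw_of_lapMatrix_mulVec_eq hg (f := Pi.single a 1)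
      (by simp) (by simp [hab.symm])))
    (G.energy_gw_nonneg _)
  have hleast : IsLeast {E | ∃ f : V → ℝ, f a = 1 ∧ f b = 0 ∧ E = energy (gw G) f}
      (g a - g b)⁻¹ := by
    refine ⟨⟨fun x => (g a - g b)⁻¹ * g x + -((g a - g b)⁻¹ * g b), ?_, ?_, ?_⟩, ?_⟩
    · field_simp
      ring
    · ring
    · rw [energy_affine, energy_gw_of_lapMatrix_mulVec_eq hg]
      field_simp
    · rintro _ ⟨f, hfa, hfb, rfl⟩
      rw [inv_le_iff_one_le_mul₀' hpos]
      exact one_le_mul_energy_gw_of_lapMatrix_mulVec_eq hg hfa hfb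
  rw [effRes, hleast.csInf_eq, one_div, inv_inv]

end Potential

theorem sum_lapMatrix_mulVec {R : Type*} [CommRing R] (v : V → R) :
    ∑ i, (G.lapMatrix R *ᵥ v) i = 0 := by
  have h : (fun _ => (1 : R)) ᵥ* G.lapMatrix R = 0 := by
    rw [← mulVec_transpose, (G.isSymm_lapMatrix (R := R)).eq, lapMatrix_mulVec_const_eq_zero]
  simpa [dotProduct, h] using dotProduct_mulVec (fun _ => (1 : R)) (G.lapMatrix R) v

noncomputable def lapMatrixAddOnes : Matrix V V ℝ := G.lapMatrix ℝ + of fun _ _ => 1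

theorem lapMatrixAddOnes_mulVec (v : V → ℝ) :
    G.lapMatrixAddOnes *ᵥ v = G.lapMatrix ℝ *ᵥ v + fun _ => ∑ i, v i := by
  rw [lapMatrixAddOnes, add_mulVec]
  congr 1
  funext i
  simp [mulVec, dotProduct]

theorem sum_lapMatrixAddOnes_mulVec (v : V → ℝ) :
    ∑ i, (G.lapMatrixAddOnes *ᵥ v) i = Fintype.card V * ∑ i, v i := by
  simp [lapMatrixAddOnes_mulVec, sum_add_distrib, sum_lapMatrix_mulVec]

variable {G}

theorem Connected.sum_eq_zero_of_lapMatrixAddOnes_mulVec (hconn : G.Connected) {u v : V → ℝ}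
    (hv : G.lapMatrixAddOnes *ᵥ v = u) (hu : ∑ i, u i = 0) : ∑ i, v i = 0 := by
  have hcard : (Fintype.card V : ℝ) ≠ 0 :=
    Nat.cast_ne_zero.2 (@Fintype.card_ne_zero _ _ hconn.nonempty)
  have h := G.sum_lapMatrixAddOnes_mulVec v
  rw [hv, hu] at h
  exact (mul_eq_zero.1 h.symm).resolve_left hcard

theorem Connected.lapMatrix_mulVec_eq_of_lapMatrixAddOnes_mulVec (hconn : G.Connected)
    {u v : V → ℝ} (hv : G.lapMatrixAddOnes *ᵥ v = u) (hu : ∑ i, u i = 0) :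
    G.lapMatrix ℝ *ᵥ v = u := by
  have hsum := hconn.sum_eq_zero_of_lapMatrixAddOnes_mulVec hv hu
  rwa [lapMatrixAddOnes_mulVec, hsum, ← Pi.zero_def, add_zero] at hv

theorem Connected.isUnit_det_lapMatrixAddOnes (hconn : G.Connected) :
    IsUnit G.lapMatrixAddOnes.det := by
  refine isUnit_iff_ne_zero.2 fun hdet => ?_
  obtain ⟨v, hv0, hv⟩ := exists_mulVec_eq_zero_iff.2 hdet
  have hconst := lapMatrix_mulVec_eq_zero_iff_forall_reachable G |>.1 <|
    hconn.lapMatrix_mulVec_eq_of_lapMatrixAddOnes_mulVec hv (by simp)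
  have hsum := hconn.sum_eq_zero_of_lapMatrixAddOnes_mulVec hv (by simp)
  refine hv0 (funext fun i => ?_)
  rw [sum_congr rfl fun j _ => hconst j i (hconn j i), sum_const, card_univ, nsmul_eq_mul,
    mul_eq_zero] at hsum
  exact hsum.resolve_left (Nat.cast_ne_zero.2 (@Fintype.card_ne_zero _ _ hconn.nonempty))

theorem Connected.lapMatrix_mulVec_lapMatrixAddOnes_inv_mulVec (hconn : G.Connected)
    {u : V → ℝ} (hu : ∑ i, u i = 0) :
    G.lapMatrix ℝ *ᵥ (G.lapMatrixAddOnes⁻¹ *ᵥ u) = u :=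
  hconn.lapMatrix_mulVec_eq_of_lapMatrixAddOnes_mulVec (by
    rw [mulVec_mulVec, mul_nonsing_inv _ hconn.isUnit_det_lapMatrixAddOnes, one_mulVec]) hu

theorem Connected.trace_lapMatrix_mul_lapMatrixAddOnes_inv (hconn : G.Connected) :
    (G.lapMatrix ℝ * G.lapMatrixAddOnes⁻¹).trace = Fintype.card V - 1 := by
  have hdet := hconn.isUnit_det_lapMatrixAddOnes
  have hcard : (Fintype.card V : ℝ) ≠ 0 :=
    Nat.cast_ne_zero.2 (@Fintype.card_ne_zero _ _ hconn.nonempty)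
  have hones : G.lapMatrixAddOnes⁻¹ *ᵥ (fun _ => 1) = fun _ => (Fintype.card V : ℝ)⁻¹ := by
    have h : G.lapMatrixAddOnes *ᵥ (fun _ => (Fintype.card V : ℝ)⁻¹) = fun _ => 1 := by
      rw [lapMatrixAddOnes_mulVec,
        (lapMatrix_mulVec_eq_zero_iff_forall_adj G).2 fun _ _ _ => rfl]
      simp [hcard]
    rw [← h, mulVec_mulVec, nonsing_inv_mul _ hdet, one_mulVec]
  have hL : G.lapMatrix ℝ = G.lapMatrixAddOnes - of fun _ _ => 1 := by
    simp [lapMatrixAddOnes]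
  have hJ : (G.lapMatrixAddOnes⁻¹ * of fun _ _ => (1 : ℝ)).trace =
      ∑ i, (G.lapMatrixAddOnes⁻¹ *ᵥ fun _ => 1) i := by
    simp [trace, mul_apply, mulVec, dotProduct]
  rw [trace_mul_comm, hL, mul_sub, nonsing_inv_mul _ hdet, trace_sub, trace_one, hJ, hones]
  simp [hcard]

variable (G)

theorem two_mul_trace_lapMatrix_mul (M : Matrix V V ℝ) :
    2 * (G.lapMatrix ℝ * M).trace =
      ∑ x, ∑ y, gw G x y * (M x x - M x y - M y x + M y y) := by
  have hdiag : ∀ x, (G.lapMatrix ℝ * M) x x = ∑ y, gw G x y * (M x x - M y x) := by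
    intro x
    rw [lapMatrix, sub_mul, Matrix.sub_apply, degMatrix, diagonal_mul, mul_apply,
      ← sum_gw_eq_degree, sum_mul, ← sum_sub_distrib, gw_eq_adjMatrix]
    exact sum_congr rfl fun y _ => by ring
  have hswap : ∑ x, ∑ y, gw G x y * (M y y - M x y) =
      ∑ x, ∑ y, gw G x y * (M x x - M y x) := by
    rw [sum_comm]
    exact sum_congr rfl fun x _ => sum_congr rfl fun y _ => by rw [gw_comm]
  calc 2 * (G.lapMatrix ℝ * M).trace
      = ∑ x, ∑ y, gw G x y * (M x x - M y x) + ∑ x, ∑ y, gw G x y * (M y y - M x y) := by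
        rw [hswap, trace]
        simp only [Matrix.diag, hdiag]
        ring
    _ = ∑ x, ∑ y, gw G x y * (M x x - M x y - M y x + M y y) := by
        rw [← sum_add_distrib]
        refine sum_congr rfl fun x _ => ?_
        rw [← sum_add_distrib]
        exact sum_congr rfl fun y _ => by ring

variable {G}

theorem Connected.sum_gw_mul_effRes (hconn : G.Connected) :
    ∑ x, ∑ y, gw G x y * effRes (gw G) x y = 2 * (Fintype.card V - 1) := by
  rw [← hconn.trace_lapMatrix_mul_lapMatrixAddOnes_inv, two_mul_trace_lapMatrix_mul]
  refine sum_congr rfl fun x _ => sum_congr rfl fun y _ => ?_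
  by_cases hxy : G.Adj x y
  · have hu : ∑ i, (Pi.single x 1 - Pi.single y 1 : V → ℝ) i = 0 := by
      simp [sum_sub_distrib]
    rw [effRes_gw_eq_of_lapMatrix_mulVec_eq hxy.ne
      (hconn.lapMatrix_mulVec_lapMatrixAddOnes_inv_mulVec hu)]
    congr 1
    simp [mulVec_sub, mulVec_single]
    ring
  · simp [gw, hxy]

end SimpleGraph

theorem edge_transitive_effRes_general {V : Type*} [Fintype V]
    (G : SimpleGraph V) (hconn : G.Connected)
    (htrans : ∀ e₁ ∈ G.edgeSet, ∀ e₂ ∈ G.edgeSet,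
      ∃ φ : G ≃g G, Sym2.map φ e₁ = e₂)
    (a b : V) (hab : G.Adj a b) :
    effRes (gw G) a b = ((Fintype.card V : ℝ) - 1) / (numEdges G : ℝ) := by
  classical
  have hedge : ∀ x y, G.Adj x y → effRes (gw G) x y = effRes (gw G) a b := by
    intro x y hxy
    obtain ⟨φ, hφ⟩ := htrans s(a, b) hab s(x, y) hxy
    rw [Sym2.map_mk, Sym2.eq_iff] at hφ
    rcases hφ with ⟨rfl, rfl⟩ | ⟨rfl, rfl⟩
    · exact G.effRes_gw_map φ a b
    · rw [effRes_comm, G.effRes_gw_map φ a b]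
  have hm : (numEdges G : ℝ) ≠ 0 := by
    have : G.edgeSet.Nonempty := ⟨s(a, b), hab⟩
    simp [numEdges, Set.ncard_eq_zero (s := G.edgeSet), this.ne_empty]
  rw [eq_div_iff hm]
  linarith [hconn.sum_gw_mul_effRes, G.sum_gw_mul_eq_of_forall_adj hedge]

/-- For a regular edge-transitive graph, the effective resistance across any
edge equals `(|V| - 1) / |E|`. -/
theorem edge_transitive_effRes {V : Type*} [Fintype V]
    (G : SimpleGraph V) [DecidableRel G.Adj] (hconn : G.Connected)
    (d : ℕ) (hreg : G.IsRegularOfDegree d)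
    (htrans : ∀ e₁ ∈ G.edgeSet, ∀ e₂ ∈ G.edgeSet,
      ∃ φ : G ≃g G, Sym2.map φ e₁ = e₂)
    (a b : V) (hab : G.Adj a b) :
    effRes (gw G) a b = ((Fintype.card V : ℝ) - 1) / (numEdges G : ℝ) :=
  edge_transitive_effRes_general G hconn htrans a b hab
end
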